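/- arXiv:1409.3649 — 2 statements merged into one kernel-verified Lean document; each statement's English description precedes it below -/
import Mathlib

section
/- Let (X, 𝓕, m) be a probability space, T an m-nonsingular transformation, and suppose the Perron–Frobenius operator 𝓛_T is asymptotically periodic with data s, r(k), g_{k,j}, λ_{k,j}. Suppose ĝ_{i,j} ∈ L¹(m) (1 ≤ i ≤ ŝ, 1 ≤ j ≤ r̂(i)) are probability density functions with ĝ_{i,j}·ĝ_{k,l} = 0 m-a.e. for (i,j) ≠ (k,l), satisfying the support-cycling condition m({ĝ_{i,j} > 0} \ T⁻¹{ĝ_{i,j+1} > 0}) = 0 for 1 ≤ j ≤ r̂(i)−1 and m({ĝ_{i,r̂(i)} > 0} \ T⁻¹{ĝ_{i,1} > 0}) = 0; set ĝ_i = (1/r̂(i)) Σ_j ĝ_{i,j} and g_k = (1/r(k)) Σ_j g_{k,j}. Fix i ∈ {1,…,ŝ} and suppose k₀ ∈ {1,…,s} satisfies m({g_{k₀} > 0} \ {ĝ_i > 0}) = 0. Then r̂(i) divides r(k₀). -/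
open MeasureTheory Filter Topology

noncomputable section

/-- `L` is the Perron–Frobenius operator of the `μ`-nonsingular transformation `T`:
for every integrable `f`, `L f` is integrable and `∫_A L f dμ = ∫_{T⁻¹ A} f dμ`
for every measurable set `A`. -/
def IsPF {α : Type*} [MeasurableSpace α] (μ : Measure α) (T : α → α)
    (L : (α → ℝ) → α → ℝ) : Prop :=
  ∀ f : α → ℝ, Integrable f μ →
    Integrable (L f) μ ∧
      ∀ A : Set α, MeasurableSet A → ∫ x in A, L f x ∂μ = ∫ x in T ⁻¹' A, f x ∂μ

/-- Asymptotic periodicity of an operator `L` on `L¹(μ)` with data `s`, `r i`,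
probability densities `g i j` and bounded linear functionals `Λ i j`. -/
def AsympPeriodic {α : Type*} [MeasurableSpace α] (μ : Measure α)
    (L : (α → ℝ) → α → ℝ) (s : ℕ) (r : ℕ → ℕ) (g : ℕ → ℕ → α → ℝ)
    (Λ : ℕ → ℕ → (α →₁[μ] ℝ) →L[ℝ] ℝ) : Prop :=
  1 ≤ s ∧ (∀ i ∈ Finset.Icc 1 s, 1 ≤ r i) ∧
    (∀ i ∈ Finset.Icc 1 s, ∀ j ∈ Finset.Icc 1 (r i),
      Measurable (g i j) ∧ Integrable (g i j) μ ∧ 0 ≤ᵐ[μ] g i j ∧ ∫ x, g i j x ∂μ = 1) ∧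
    (∀ i ∈ Finset.Icc 1 s, ∀ j ∈ Finset.Icc 1 (r i), ∀ k ∈ Finset.Icc 1 s,
      ∀ l ∈ Finset.Icc 1 (r k), (i, j) ≠ (k, l) →
        (fun x => g i j x * g k l x) =ᵐ[μ] 0) ∧
    (∀ i ∈ Finset.Icc 1 s,
      (∀ j ∈ Finset.Icc 1 (r i - 1), L (g i j) =ᵐ[μ] g i (j + 1)) ∧
        L (g i (r i)) =ᵐ[μ] g i 1) ∧
    ∀ (f : α → ℝ) (hf : Integrable f μ),
      Tendsto (fun n => ∫ x, |(L^[n] (fun x => f x -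
          ∑ i ∈ Finset.Icc 1 s, ∑ j ∈ Finset.Icc 1 (r i), Λ i j (hf.toL1 f) * g i j x)) x| ∂μ)
        atTop (𝓝 0)

/-- The averaged density `(1/r) ∑_{j=1}^{r} g j`. -/
def avgDens {α : Type*} (r : ℕ) (g : ℕ → α → ℝ) : α → ℝ :=
  fun x => (r : ℝ)⁻¹ * ∑ j ∈ Finset.Icc 1 r, g j x

/-!
Let `A n` be the support of `ĝ_{i, j+n}` (second index read cyclically), where `j` is chosen
so that `g_{k₀,1}` charges `A 0`; such a `j` exists because the `A n` cover the support of
`g_{k₀}`. The restriction `u` of `g_{k₀,1}` to `A 0` satisfies `0 ≤ 𝓛ⁿ u ≤ g_{k₀,1+n}`, and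
`𝓛ⁿ u` is carried by `A n`. Along the times `n` divisible by `r̂ i` and by every `r k`,
asymptotic periodicity makes `𝓛ⁿ u` converge in `L¹` to `∑ λ_{k,l}(u) g_{k,l}`, which is
therefore squeezed between `0` and `g_{k₀,1}` and carried by `A 0`. By orthogonality it equals
`(∫ u) g_{k₀,1}`, so `g_{k₀,1}` itself is carried by `A 0`. Being fixed by `𝓛^{r k₀}`, it is
also carried by `A (r k₀)`; as `A 0` and `A n` are disjoint unless `r̂ i ∣ n`, this forces
`r̂ i ∣ r k₀`.
-/

open Finset

/-- The index reached from `1` after `n` steps along the cycle `1 → 2 → ⋯ → R → 1`. -/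
def cyc (R n : ℕ) : ℕ := n % R + 1

lemma cyc_mem {R : ℕ} (hR : 0 < R) (n : ℕ) : cyc R n ∈ Icc 1 R := by
  have := Nat.mod_lt n hR
  simp only [cyc, mem_Icc]
  omega

lemma cyc_sub_one {R j : ℕ} (hj : j ∈ Icc 1 R) : cyc R (j - 1) = j := by
  rw [mem_Icc] at hj
  rw [cyc, Nat.mod_eq_of_lt (by omega)]
  omega

lemma cyc_add_of_dvd {R d : ℕ} (h : R ∣ d) (n : ℕ) : cyc R (n + d) = cyc R n := by
  obtain ⟨t, rfl⟩ := h
  simp [cyc]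

lemma dvd_of_cyc_add_eq {R n d : ℕ} (h : cyc R (n + d) = cyc R n) : R ∣ d := by
  have h' : n + d ≡ n + 0 [MOD R] := by unfold cyc at h; unfold Nat.ModEq; rw [add_zero]; omega
  exact (Nat.modEq_zero_iff_dvd).1 (Nat.ModEq.add_left_cancel' n h')

lemma cyc_step {R : ℕ} (hR : 0 < R) {P : ℕ → ℕ → Prop}
    (hstep : ∀ j ∈ Icc 1 (R - 1), P j (j + 1)) (hlast : P R 1) (n : ℕ) :
    P (cyc R n) (cyc R (n + 1)) := by
  have hlt := Nat.mod_lt n hR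
  have hsucc : (n + 1) % R = (n % R + 1) % R := by
    conv_lhs => rw [← Nat.div_add_mod n R, add_assoc, Nat.mul_add_mod]
  unfold cyc
  rw [hsucc]
  rcases (show n % R + 1 ≤ R by omega).lt_or_eq with hlt' | heq
  · rw [Nat.mod_eq_of_lt hlt']
    exact hstep _ (mem_Icc.2 ⟨by omega, by omega⟩)
  · rw [heq, Nat.mod_self]
    exact hlast

section Integral

variable {X : Type*} [MeasurableSpace X] {μ : Measure X}

lemma exists_seq_tendsto_ae_of_tendsto_integral_abs {F : ℕ → X → ℝ} {f : X → ℝ}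
    (hF : ∀ n, Integrable (F n) μ) (hf : Integrable f μ)
    (h : Tendsto (fun n => ∫ x, |F n x - f x| ∂μ) atTop (𝓝 0)) :
    ∃ ns : ℕ → ℕ, ∀ᵐ x ∂μ, Tendsto (fun i => F (ns i) x) atTop (𝓝 (f x)) := by
  have hnorm : ∀ n, eLpNorm (F n - f) 1 μ = ENNReal.ofReal (∫ x, |F n x - f x| ∂μ) := fun n => by
    rw [eLpNorm_one_eq_lintegral_enorm, ← ofReal_integral_norm_eq_lintegral_enorm ((hF n).sub hf)]
    rfl
  have hmeas : TendstoInMeasure μ F atTop f :=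
    tendstoInMeasure_of_tendsto_eLpNorm one_ne_zero (fun n => (hF n).aestronglyMeasurable)
      hf.aestronglyMeasurable (by simpa [hnorm] using ENNReal.tendsto_ofReal h)
  obtain ⟨ns, -, hns⟩ := hmeas.exists_seq_tendsto_ae
  exact ⟨ns, hns⟩

lemma measure_pos_inter_pos_eq_zero {f h : X → ℝ} (hfh : (fun x => f x * h x) =ᵐ[μ] 0) :
    μ ({x | 0 < f x} ∩ {x | 0 < h x}) = 0 := by
  refine measure_eq_zero_iff_ae_notMem.2 ?_
  filter_upwards [hfh] with x hx ⟨hfx, hhx⟩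
  exact (mul_pos hfx hhx).ne' hx

lemma exists_setIntegral_ne_zero {ι : Type*} {s : Finset ι} {B : ι → Set X}
    (hB : ∀ j ∈ s, MeasurableSet (B j)) {f : X → ℝ} (hf : Integrable f μ) (hf0 : 0 ≤ᵐ[μ] f)
    (hf1 : ∫ x, f x ∂μ ≠ 0) (hcover : ∀ᵐ x ∂μ, 0 < f x → ∃ j ∈ s, x ∈ B j) :
    ∃ j ∈ s, ∫ x in B j, f x ∂μ ≠ 0 := by
  by_contra! hzero
  have hvanish : ∀ j ∈ s, ∀ᵐ x ∂μ, x ∈ B j → f x = 0 := fun j hj =>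
    (ae_restrict_iff' (hB j hj)).1 <| (setIntegral_eq_zero_iff_of_nonneg_ae
      (ae_restrict_of_ae hf0) hf.integrableOn).1 (hzero j hj)
  refine hf1 (integral_eq_zero_of_ae ?_)
  filter_upwards [hf0, hcover, (eventually_all_finset s).2 hvanish] with x hx0 hxB hxv
  by_contra hne
  obtain ⟨j, hj, hxj⟩ := hxB (lt_of_le_of_ne hx0 (Ne.symm hne))
  exact hne (hxv j hj hxj)

end Integral

section avgDens

variable {X : Type*} {R : ℕ} {G : ℕ → X → ℝ}

lemma avgDens_pos {x : X} {l : ℕ} (hl : l ∈ Icc 1 R) (hG : ∀ j ∈ Icc 1 R, 0 ≤ G j x)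
    (hGl : 0 < G l x) : 0 < avgDens R G x := by
  have hR : (0 : ℝ) < R := by
    rw [mem_Icc] at hl
    exact_mod_cast hl.1.trans hl.2
  exact mul_pos (inv_pos.2 hR) (sum_pos' hG ⟨l, hl, hGl⟩)

lemma exists_pos_of_avgDens_pos {x : X} (h : 0 < avgDens R G x) : ∃ j ∈ Icc 1 R, 0 < G j x := by
  have hsum := pos_of_mul_pos_right h (inv_nonneg.2 (Nat.cast_nonneg R))
  exact exists_lt_of_sum_lt (f := fun _ => (0 : ℝ)) (by simpa using hsum)

lemma ae_exists_pos_of_measure_avgDens_diff_eq_zero [MeasurableSpace X] {μ : Measure X}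
    {R' : ℕ} {G' : ℕ → X → ℝ} {l : ℕ} (hl : l ∈ Icc 1 R) (hG : ∀ j ∈ Icc 1 R, 0 ≤ᵐ[μ] G j)
    (hsupp : μ ({x | 0 < avgDens R G x} \ {x | 0 < avgDens R' G' x}) = 0) :
    ∀ᵐ x ∂μ, 0 < G l x → ∃ j ∈ Icc 1 R', 0 < G' j x := by
  filter_upwards [measure_eq_zero_iff_ae_notMem.1 hsupp, (eventually_all_finset _).2 hG]
    with x hx hG hGl
  exact exists_pos_of_avgDens_pos (not_not.1 fun h => hx ⟨avgDens_pos hl hG hGl, h⟩)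

end avgDens

/-- With `c k l = Λ k l f`, this is the function `∑ λ_{k,l}(f) g_{k,l}` approximating the iterates
of `f` in `AsympPeriodic`. -/
def periodicPart {X : Type*} (s : ℕ) (r : ℕ → ℕ) (g : ℕ → ℕ → X → ℝ) (c : ℕ → ℕ → ℝ) :
    X → ℝ :=
  fun x => ∑ k ∈ Icc 1 s, ∑ l ∈ Icc 1 (r k), c k l * g k l x

lemma periodicPart_eq_sum_sigma {X : Type*} (s : ℕ) (r : ℕ → ℕ) (g : ℕ → ℕ → X → ℝ)
    (c : ℕ → ℕ → ℝ) : periodicPart s r g c =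
      fun x => ∑ p ∈ (Icc 1 s).sigma fun k => Icc 1 (r k), c p.1 p.2 * g p.1 p.2 x := by
  funext x
  exact (sum_sigma (Icc 1 s) (fun k => Icc 1 (r k)) fun p => c p.1 p.2 * g p.1 p.2 x).symm

namespace IsPF

variable {X : Type*} [MeasurableSpace X] {μ : Measure X} {T : X → X}
  {L : (X → ℝ) → X → ℝ} {f h : X → ℝ}

lemma integrable (hL : IsPF μ T L) (hf : Integrable f μ) : Integrable (L f) μ := (hL f hf).1

lemma setIntegral_eq (hL : IsPF μ T L) (hf : Integrable f μ) {A : Set X}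
    (hA : MeasurableSet A) : ∫ x in A, L f x ∂μ = ∫ x in T ⁻¹' A, f x ∂μ :=
  (hL f hf).2 A hA

lemma integral_eq (hL : IsPF μ T L) (hf : Integrable f μ) : ∫ x, L f x ∂μ = ∫ x, f x ∂μ := by
  simpa using hL.setIntegral_eq hf MeasurableSet.univ

lemma iterate (hL : IsPF μ T L) (hT : Measurable T) (n : ℕ) : IsPF μ T^[n] L^[n] := by
  induction n with
  | zero => exact fun f hf => ⟨hf, fun A _ => rfl⟩
  | succ n ih =>
    intro f hf
    rw [Function.iterate_succ', Function.iterate_succ']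
    refine ⟨hL.integrable (ih f hf).1, fun A hA => ?_⟩
    rw [Function.comp_apply, hL.setIntegral_eq (ih f hf).1 hA, (ih f hf).2 _ (hT hA),
      Set.preimage_comp]

lemma nonneg (hL : IsPF μ T L) (hf : Integrable f μ) (hf0 : 0 ≤ᵐ[μ] f) : 0 ≤ᵐ[μ] L f :=
  ae_nonneg_of_forall_setIntegral_nonneg (hL.integrable hf) fun A hA _ => by
    rw [hL.setIntegral_eq hf hA]
    exact setIntegral_nonneg_of_ae hf0

lemma ae_eq_zero_off (hL : IsPF μ T L) (hf : Integrable f μ)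
    (hf0 : 0 ≤ᵐ[μ] f) {B B' : Set X} (hB' : MeasurableSet B') (hBB' : μ (B \ T ⁻¹' B') = 0)
    (hoff : ∀ᵐ x ∂μ, x ∉ B → f x = 0) : ∀ᵐ x ∂μ, x ∉ B' → L f x = 0 := by
  have hoff' : ∀ᵐ x ∂μ, x ∈ (T ⁻¹' B')ᶜ → f x = 0 := by
    filter_upwards [measure_eq_zero_iff_ae_notMem.1 hBB', hoff] with x hx hfx hxT
    exact hfx fun hxB => hx ⟨hxB, hxT⟩
  have hzero : ∫ x in B'ᶜ, L f x ∂μ = 0 := by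
    rw [hL.setIntegral_eq hf hB'.compl, Set.preimage_compl]
    exact setIntegral_eq_zero_of_ae_eq_zero hoff'
  have hLf := (setIntegral_eq_zero_iff_of_nonneg_ae (ae_restrict_of_ae (hL.nonneg hf hf0))
    (hL.integrable hf).integrableOn).1 hzero
  exact (ae_restrict_iff' hB'.compl).1 hLf

lemma iterate_ae_eq_zero_off (hL : IsPF μ T L) (hT : Measurable T) {A : ℕ → Set X}
    (hA : ∀ n, MeasurableSet (A n)) (hAT : ∀ n, μ (A n \ T ⁻¹' A (n + 1)) = 0)
    (hf : Integrable f μ) (hf0 : 0 ≤ᵐ[μ] f) (hoff : ∀ᵐ x ∂μ, x ∉ A 0 → f x = 0) (n : ℕ) :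
    ∀ᵐ x ∂μ, x ∉ A n → L^[n] f x = 0 := by
  induction n with
  | zero => exact hoff
  | succ n ih =>
    rw [Function.iterate_succ']
    exact hL.ae_eq_zero_off ((hL.iterate hT n).integrable hf)
      ((hL.iterate hT n).nonneg hf hf0) (hA (n + 1)) (hAT n) ih

variable [SigmaFinite μ]

lemma ae_eq_of_setIntegral_preimage (hL : IsPF μ T L) (hf : Integrable f μ)
    (hh : Integrable h μ)
    (heq : ∀ A, MeasurableSet A → ∫ x in T ⁻¹' A, f x ∂μ = ∫ x in A, h x ∂μ) :
    L f =ᵐ[μ] h :=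
  ae_eq_of_forall_setIntegral_eq_of_sigmaFinite (fun _ _ _ => (hL.integrable hf).integrableOn)
    (fun _ _ _ => hh.integrableOn) fun A hA _ => (hL.setIntegral_eq hf hA).trans (heq A hA)

lemma congr_ae (hL : IsPF μ T L) (hf : Integrable f μ) (hh : Integrable h μ)
    (hfh : f =ᵐ[μ] h) : L f =ᵐ[μ] L h :=
  hL.ae_eq_of_setIntegral_preimage hf (hL.integrable hh) fun A hA => by
    rw [hL.setIntegral_eq hh hA, integral_congr_ae (ae_restrict_of_ae hfh)]

lemma sub (hL : IsPF μ T L) (hf : Integrable f μ) (hh : Integrable h μ) :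
    L (f - h) =ᵐ[μ] L f - L h :=
  hL.ae_eq_of_setIntegral_preimage (hf.sub hh) ((hL.integrable hf).sub (hL.integrable hh))
    fun A hA => by
      simp only [Pi.sub_apply]
      rw [integral_sub hf.integrableOn hh.integrableOn,
        integral_sub (hL.integrable hf).integrableOn (hL.integrable hh).integrableOn,
        hL.setIntegral_eq hf hA, hL.setIntegral_eq hh hA]

lemma mono (hL : IsPF μ T L) (hf : Integrable f μ) (hh : Integrable h μ) (hfh : f ≤ᵐ[μ] h) :
    L f ≤ᵐ[μ] L h := by
  have hdiff := hL.nonneg (hh.sub hf) (by filter_upwards [hfh] with x hx using sub_nonneg.2 hx)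
  filter_upwards [hdiff, hL.sub hh hf] with x hx hsub
  simpa [hsub] using hx

lemma finsetSum_const_mul (hL : IsPF μ T L) {ι : Type*} (s : Finset ι) (c : ι → ℝ)
    {F : ι → X → ℝ} (hF : ∀ i ∈ s, Integrable (F i) μ) :
    L (fun x => ∑ i ∈ s, c i * F i x) =ᵐ[μ] fun x => ∑ i ∈ s, c i * L (F i) x := by
  refine hL.ae_eq_of_setIntegral_preimage (integrable_finsetSum _ fun i hi => (hF i hi).const_mul _)
    (integrable_finsetSum _ fun i hi => (hL.integrable (hF i hi)).const_mul _) fun A hA => ?_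
  rw [integral_finsetSum _ fun i hi => ((hF i hi).const_mul _).integrableOn,
    integral_finsetSum _ fun i hi => ((hL.integrable (hF i hi)).const_mul _).integrableOn]
  refine Finset.sum_congr rfl fun i hi => ?_
  rw [integral_const_mul, integral_const_mul, hL.setIntegral_eq (hF i hi) hA]

lemma iterate_ae_eq_of_cycle (hL : IsPF μ T L) {G : ℕ → X → ℝ}
    (hG : ∀ n, Integrable (G n) μ) (hLG : ∀ n, L (G n) =ᵐ[μ] G (n + 1)) (n : ℕ) :
    L^[n] (G 0) =ᵐ[μ] G n := by
  induction n with
  | zero => rfl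
  | succ n ih =>
    rw [Function.iterate_succ_apply']
    exact (hL.congr_ae ((hG n).congr ih.symm) (hG n) ih).trans (hLG n)

end IsPF

namespace AsympPeriodic

variable {X : Type*} [MeasurableSpace X] {μ : Measure X} {T : X → X}
  {L : (X → ℝ) → X → ℝ} {s : ℕ} {r : ℕ → ℕ} {g : ℕ → ℕ → X → ℝ}
  {Λ : ℕ → ℕ → (X →₁[μ] ℝ) →L[ℝ] ℝ}

lemma integrable_periodicPart (hap : AsympPeriodic μ L s r g Λ) (c : ℕ → ℕ → ℝ) :
    Integrable (periodicPart s r g c) μ :=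
  integrable_finsetSum _ fun k hk => integrable_finsetSum _ fun l hl =>
    (hap.2.2.1 k hk l hl).2.1.const_mul _

lemma integral_periodicPart (hap : AsympPeriodic μ L s r g Λ) (hL : IsPF μ T L)
    (hT : Measurable T) {u : X → ℝ} (hu : Integrable u μ) :
    ∫ x, periodicPart s r g (fun k l => Λ k l (hu.toL1 u)) x ∂μ = ∫ x, u x ∂μ := by
  set p := periodicPart s r g fun k l => Λ k l (hu.toL1 u)
  have hp := hap.integrable_periodicPart fun k l => Λ k l (hu.toL1 u)
  have hbound : ∀ n, |∫ x, (u - p) x ∂μ| ≤ ∫ x, |L^[n] (u - p) x| ∂μ := fun n => by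
    rw [← (hL.iterate hT n).integral_eq (hu.sub hp)]
    exact abs_integral_le_integral_abs
  have hzero := abs_nonpos_iff.1 (ge_of_tendsto' (hap.2.2.2.2.2 u hu) hbound)
  rw [integral_sub' hu hp] at hzero
  linarith

lemma periodicPart_ae_eq_of_le (hap : AsympPeriodic μ L s r g Λ) {k₀ l₀ : ℕ}
    (hk₀ : k₀ ∈ Icc 1 s) (hl₀ : l₀ ∈ Icc 1 (r k₀)) {c : ℕ → ℕ → ℝ}
    (h0 : 0 ≤ᵐ[μ] periodicPart s r g c) (hle : periodicPart s r g c ≤ᵐ[μ] g k₀ l₀) :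
    periodicPart s r g c =ᵐ[μ] fun x => c k₀ l₀ * g k₀ l₀ x := by
  set I := (Icc 1 s).sigma fun k => Icc 1 (r k)
  have horth : ∀ᵐ x ∂μ, ∀ p ∈ I, p ≠ ⟨k₀, l₀⟩ → g p.1 p.2 x * g k₀ l₀ x = 0 := by
    refine (eventually_all_finset I).2 fun ⟨k, l⟩ hp => ?_
    obtain ⟨hk, hl⟩ := mem_sigma.1 hp
    by_cases hkl : (k, l) = (k₀, l₀)
    · obtain ⟨rfl, rfl⟩ := Prod.ext_iff.1 hkl
      exact .of_forall fun x hne => absurd rfl hne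
    · filter_upwards [hap.2.2.2.1 k hk l hl k₀ hk₀ l₀ hl₀ hkl] with x hx _ using hx
  filter_upwards [h0, hle, horth] with x hx0 hxle hxorth
  by_cases hgx : g k₀ l₀ x = 0
  · rw [hgx] at hxle ⊢
    rw [mul_zero]
    exact le_antisymm hxle hx0
  · rw [periodicPart_eq_sum_sigma]
    refine sum_eq_single_of_mem (⟨k₀, l₀⟩ : Σ _ : ℕ, ℕ) (mem_sigma.2 ⟨hk₀, hl₀⟩) fun p hp hne => ?_
    rw [(mul_eq_zero.1 (hxorth p hp hne)).resolve_right hgx, mul_zero]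

variable [SigmaFinite μ]

lemma iterate_density (hap : AsympPeriodic μ L s r g Λ) (hL : IsPF μ T L) {k l : ℕ}
    (hk : k ∈ Icc 1 s) (hl : l ∈ Icc 1 (r k)) (n : ℕ) :
    L^[n] (g k l) =ᵐ[μ] g k (cyc (r k) (l - 1 + n)) := by
  obtain ⟨-, hr, hg, -, hcyc, -⟩ := hap
  have hG := hL.iterate_ae_eq_of_cycle (G := fun n => g k (cyc (r k) (l - 1 + n)))
    (fun n => (hg k hk _ (cyc_mem (hr k hk) _)).2.1)
    (fun n => cyc_step (P := fun a b => L (g k a) =ᵐ[μ] g k b) (hr k hk) (hcyc k hk).1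
      (hcyc k hk).2 (l - 1 + n)) n
  simpa only [add_zero, cyc_sub_one hl] using hG

lemma iterate_periodicPart (hap : AsympPeriodic μ L s r g Λ) (hL : IsPF μ T L)
    (hT : Measurable T) {N : ℕ} (hN : ∀ k ∈ Icc 1 s, r k ∣ N) (c : ℕ → ℕ → ℝ) :
    L^[N] (periodicPart s r g c) =ᵐ[μ] periodicPart s r g c := by
  have hfix : ∀ p ∈ (Icc 1 s).sigma fun k => Icc 1 (r k), L^[N] (g p.1 p.2) =ᵐ[μ] g p.1 p.2 := by
    rintro ⟨k, l⟩ hp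
    obtain ⟨hk, hl⟩ := mem_sigma.1 hp
    simpa only [cyc_add_of_dvd (hN k hk), cyc_sub_one hl] using hap.iterate_density hL hk hl N
  rw [periodicPart_eq_sum_sigma]
  refine ((hL.iterate hT N).finsetSum_const_mul _ _ fun p hp => ?_).trans ?_
  · obtain ⟨hk, hl⟩ := mem_sigma.1 hp
    exact (hap.2.2.1 _ hk _ hl).2.1
  · filter_upwards [(eventually_all_finset _).2 hfix] with x hx
    exact sum_congr rfl fun p hp => by rw [hx p hp]

lemma tendsto_integral_abs_iterate_sub (hap : AsympPeriodic μ L s r g Λ) (hL : IsPF μ T L)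
    (hT : Measurable T) {u : X → ℝ} (hu : Integrable u μ) {N : ℕ} (hN0 : 0 < N)
    (hN : ∀ k ∈ Icc 1 s, r k ∣ N) :
    Tendsto (fun n => ∫ x, |L^[n * N] u x -
      periodicPart s r g (fun k l => Λ k l (hu.toL1 u)) x| ∂μ) atTop (𝓝 0) := by
  set p := periodicPart s r g fun k l => Λ k l (hu.toL1 u)
  have hp := hap.integrable_periodicPart fun k l => Λ k l (hu.toL1 u)
  have hmul : Tendsto (fun n => n * N) atTop atTop :=
    tendsto_atTop_mono (fun n => Nat.le_mul_of_pos_right n hN0) tendsto_id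
  refine ((hap.2.2.2.2.2 u hu).comp hmul).congr fun n => integral_congr_ae ?_
  filter_upwards [(hL.iterate hT (n * N)).sub hu hp,
    hap.iterate_periodicPart hL hT (fun k hk => (hN k hk).mul_left n) fun k l => Λ k l (hu.toL1 u)]
    with x hsub hfix
  change |L^[n * N] (u - p) x| = _
  rw [hsub, Pi.sub_apply, hfix]

lemma ae_mem_of_forall_iterate_mem (hap : AsympPeriodic μ L s r g Λ) (hL : IsPF μ T L)
    (hT : Measurable T) {u : X → ℝ} (hu : Integrable u μ) {N : ℕ} (hN0 : 0 < N)
    (hN : ∀ k ∈ Icc 1 s, r k ∣ N) {S : X → Set ℝ} (hS : ∀ x, IsClosed (S x))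
    (hmem : ∀ n, ∀ᵐ x ∂μ, L^[n * N] u x ∈ S x) :
    ∀ᵐ x ∂μ, periodicPart s r g (fun k l => Λ k l (hu.toL1 u)) x ∈ S x := by
  obtain ⟨ns, hns⟩ := exists_seq_tendsto_ae_of_tendsto_integral_abs
    (fun n => (hL.iterate hT (n * N)).integrable hu) (hap.integrable_periodicPart _)
    (hap.tendsto_integral_abs_iterate_sub hL hT hu hN0 hN)
  filter_upwards [hns, ae_all_iff.2 hmem] with x hx hall
  exact (hS x).mem_of_tendsto hx (.of_forall fun i => hall (ns i))

lemma ae_eq_zero_off_of_iterate (hap : AsympPeriodic μ L s r g Λ) (hL : IsPF μ T L)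
    (hT : Measurable T) {k₀ l₀ : ℕ} (hk₀ : k₀ ∈ Icc 1 s) (hl₀ : l₀ ∈ Icc 1 (r k₀))
    {u : X → ℝ} (hu : Integrable u μ) (hu0 : 0 ≤ᵐ[μ] u) (hug : u ≤ᵐ[μ] g k₀ l₀)
    (hu1 : ∫ x, u x ∂μ ≠ 0) {N : ℕ} (hN0 : 0 < N) (hN : ∀ k ∈ Icc 1 s, r k ∣ N) {B : Set X}
    (hoff : ∀ n, ∀ᵐ x ∂μ, x ∉ B → L^[n * N] u x = 0) :
    ∀ᵐ x ∂μ, x ∉ B → g k₀ l₀ x = 0 := by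
  set S : X → Set ℝ := fun x => Set.Icc 0 (g k₀ l₀ x) ∩ {y | x ∉ B → y = 0}
  have hS : ∀ x, IsClosed (S x) := fun x => by
    by_cases hx : x ∈ B
    · simpa [S, hx] using isClosed_Icc
    · simpa [S, hx] using isClosed_Icc.inter isClosed_singleton
  have hmem : ∀ n, ∀ᵐ x ∂μ, L^[n * N] u x ∈ S x := fun n => by
    have hle := ((hL.iterate hT (n * N)).mono hu (hap.2.2.1 k₀ hk₀ l₀ hl₀).2.1 hug).trans
      (hap.iterate_density hL hk₀ hl₀ (n * N)).le
    rw [cyc_add_of_dvd ((hN k₀ hk₀).mul_left n), cyc_sub_one hl₀] at hle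
    filter_upwards [(hL.iterate hT (n * N)).nonneg hu hu0, hle, hoff n] with x h0 hle hoff
    exact ⟨⟨h0, hle⟩, hoff⟩
  have hlim := hap.ae_mem_of_forall_iterate_mem hL hT hu hN0 hN hS hmem
  have hpeq := hap.periodicPart_ae_eq_of_le hk₀ hl₀ (hlim.mono fun x hx => hx.1.1)
    (hlim.mono fun x hx => hx.1.2)
  have hcoef : Λ k₀ l₀ (hu.toL1 u) ≠ 0 := by
    intro h0
    rw [← hap.integral_periodicPart hL hT hu, integral_congr_ae hpeq] at hu1
    simp [h0] at hu1
  filter_upwards [hlim, hpeq] with x hx hpx hxB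
  exact (mul_eq_zero.1 (hpx ▸ hx.2 hxB)).resolve_left hcoef

lemma ae_eq_zero_off_of_setIntegral_ne_zero (hap : AsympPeriodic μ L s r g Λ)
    (hL : IsPF μ T L) (hT : Measurable T) {k₀ l₀ : ℕ} (hk₀ : k₀ ∈ Icc 1 s)
    (hl₀ : l₀ ∈ Icc 1 (r k₀)) {A : ℕ → Set X} (hA : ∀ n, MeasurableSet (A n))
    (hAT : ∀ n, μ (A n \ T ⁻¹' A (n + 1)) = 0) {P : ℕ} (hP : 0 < P)
    (hAP : Function.Periodic A P) (hcharge : ∫ x in A 0, g k₀ l₀ x ∂μ ≠ 0) :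
    ∀ᵐ x ∂μ, x ∉ A 0 → g k₀ l₀ x = 0 := by
  obtain ⟨-, hgi, hg0, -⟩ := hap.2.2.1 k₀ hk₀ l₀ hl₀
  set u := (A 0).indicator (g k₀ l₀)
  have hu : Integrable u μ := hgi.indicator (hA 0)
  have hu0 : 0 ≤ᵐ[μ] u := by
    filter_upwards [hg0] with x hx using Set.indicator_apply_nonneg fun _ => hx
  have hug : u ≤ᵐ[μ] g k₀ l₀ := by
    filter_upwards [hg0] with x hx using Set.indicator_le_self' (fun _ _ => hx) x
  have hu1 : ∫ x, u x ∂μ ≠ 0 := by rwa [integral_indicator (hA 0)]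
  set Q := ∏ k ∈ Icc 1 s, r k
  refine hap.ae_eq_zero_off_of_iterate hL hT hk₀ hl₀ hu hu0 hug hu1
    (Nat.mul_pos hP (prod_pos hap.2.1)) (fun k hk => (dvd_prod_of_mem r hk).mul_left P)
    fun n => ?_
  have hAn : A (n * (P * Q)) = A 0 := by
    rw [show n * (P * Q) = (n * Q) * P by ring]
    exact hAP.nat_mul_eq _
  simpa only [hAn] using hL.iterate_ae_eq_zero_off hT hA hAT hu hu0
    (.of_forall fun x hx => Set.indicator_of_notMem hx _) (n * (P * Q))

lemma dvd_of_setIntegral_ne_zero (hap : AsympPeriodic μ L s r g Λ) (hL : IsPF μ T L)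
    (hT : Measurable T) {k₀ l₀ : ℕ} (hk₀ : k₀ ∈ Icc 1 s) (hl₀ : l₀ ∈ Icc 1 (r k₀))
    {A : ℕ → Set X} (hA : ∀ n, MeasurableSet (A n)) (hAT : ∀ n, μ (A n \ T ⁻¹' A (n + 1)) = 0)
    {P : ℕ} (hP : 0 < P) (hAP : Function.Periodic A P)
    (hdisj : ∀ n, ¬ P ∣ n → μ (A 0 ∩ A n) = 0) (hcharge : ∫ x in A 0, g k₀ l₀ x ∂μ ≠ 0) :
    P ∣ r k₀ := by
  obtain ⟨-, hgi, hg0, hg1⟩ := hap.2.2.1 k₀ hk₀ l₀ hl₀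
  have hoff₀ := hap.ae_eq_zero_off_of_setIntegral_ne_zero hL hT hk₀ hl₀ hA hAT hP hAP hcharge
  have hoff := hL.iterate_ae_eq_zero_off hT hA hAT hgi hg0 hoff₀ (r k₀)
  have hret := hap.iterate_density hL hk₀ hl₀ (r k₀)
  rw [cyc_add_of_dvd dvd_rfl, cyc_sub_one hl₀] at hret
  by_contra hndvd
  refine one_ne_zero (hg1.symm.trans (integral_eq_zero_of_ae ?_))
  filter_upwards [hoff₀, hoff, hret, measure_eq_zero_iff_ae_notMem.1 (hdisj _ hndvd)]
    with x hx₀ hxr hxret hx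
  by_cases hxA : x ∈ A 0
  · rw [← hxret]
    exact hxr fun hxr => hx ⟨hxA, hxr⟩
  · exact hx₀ hxA

end AsympPeriodic

theorem stmt_1_general {X : Type*} [MeasurableSpace X] (m : Measure X) [IsProbabilityMeasure m]
    (T : X → X) (hT : Measurable T)
    (L : (X → ℝ) → X → ℝ) (hL : IsPF m T L)
    (s : ℕ) (r : ℕ → ℕ) (g : ℕ → ℕ → X → ℝ) (Λ : ℕ → ℕ → (X →₁[m] ℝ) →L[ℝ] ℝ)
    (hap : AsympPeriodic m L s r g Λ)
    (s' : ℕ) (r' : ℕ → ℕ) (g' : ℕ → ℕ → X → ℝ)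
    (hr' : ∀ i ∈ Finset.Icc 1 s', 1 ≤ r' i)
    (hdens : ∀ i ∈ Finset.Icc 1 s', ∀ j ∈ Finset.Icc 1 (r' i),
      Measurable (g' i j) ∧ Integrable (g' i j) m ∧ 0 ≤ᵐ[m] g' i j ∧ ∫ x, g' i j x ∂m = 1)
    (horth : ∀ i ∈ Finset.Icc 1 s', ∀ j ∈ Finset.Icc 1 (r' i), ∀ k ∈ Finset.Icc 1 s',
      ∀ l ∈ Finset.Icc 1 (r' k), (i, j) ≠ (k, l) →
        (fun x => g' i j x * g' k l x) =ᵐ[m] 0)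
    (hcyc : ∀ i ∈ Finset.Icc 1 s',
      (∀ j ∈ Finset.Icc 1 (r' i - 1),
        m ({x | 0 < g' i j x} \ T ⁻¹' {x | 0 < g' i (j + 1) x}) = 0) ∧
        m ({x | 0 < g' i (r' i) x} \ T ⁻¹' {x | 0 < g' i 1 x}) = 0)
    (i : ℕ) (hi : i ∈ Finset.Icc 1 s') (k₀ : ℕ) (hk₀ : k₀ ∈ Finset.Icc 1 s)
    (hsupp : m ({x | 0 < avgDens (r k₀) (g k₀) x} \
        {x | 0 < avgDens (r' i) (g' i) x}) = 0) :
    r' i ∣ r k₀ := by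
  have h1 : 1 ∈ Icc 1 (r k₀) := mem_Icc.2 ⟨le_rfl, hap.2.1 k₀ hk₀⟩
  obtain ⟨-, hgi, hg0, hg1⟩ := hap.2.2.1 k₀ hk₀ 1 h1
  have hR : 0 < r' i := hr' i hi
  have hA : ∀ j ∈ Icc 1 (r' i), MeasurableSet {x | 0 < g' i j x} := fun j hj =>
    measurableSet_lt measurable_const (hdens i hi j hj).1
  obtain ⟨j, hj, hcharge⟩ := exists_setIntegral_ne_zero hA hgi hg0 (by simp [hg1])
    (ae_exists_pos_of_measure_avgDens_diff_eq_zero h1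
      (fun l hl => (hap.2.2.1 k₀ hk₀ l hl).2.2.1) hsupp)
  set A : ℕ → Set X := fun n => {x | 0 < g' i (cyc (r' i) (j - 1 + n)) x}
  have hAT : ∀ n, m (A n \ T ⁻¹' A (n + 1)) = 0 := fun n =>
    cyc_step (P := fun a b => m ({x | 0 < g' i a x} \ T ⁻¹' {x | 0 < g' i b x}) = 0)
      hR (hcyc i hi).1 (hcyc i hi).2 (j - 1 + n)
  have hAP : Function.Periodic A (r' i) := fun n => by
    simp only [A, ← add_assoc, cyc_add_of_dvd dvd_rfl]
  have hA0 : A 0 = {x | 0 < g' i j x} := by simp only [A, add_zero, cyc_sub_one hj]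
  have hdisj : ∀ n, ¬ r' i ∣ n → m (A 0 ∩ A n) = 0 := fun n hn => by
    rw [hA0]
    refine measure_pos_inter_pos_eq_zero (horth i hi j hj i hi _ (cyc_mem hR _) fun h => hn ?_)
    exact dvd_of_cyc_add_eq (by rw [cyc_sub_one hj]; exact (Prod.ext_iff.1 h).2.symm)
  exact hap.dvd_of_setIntegral_ne_zero hL hT hk₀ h1 (fun n => hA _ (cyc_mem hR _)) hAT hR hAP
    hdisj (by simpa only [add_zero, cyc_sub_one hj] using hcharge)

/-- **Theorem 3.1(2).** Let `𝓛_T` be asymptotically periodic with data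
`s, r, g, Λ` and let `ĝ_{i,j}` (`1 ≤ i ≤ s', 1 ≤ j ≤ r' i`) be mutually
orthogonal probability densities whose supports are cycled by `T`; set
`ĝ_i = (1/r' i) ∑_j ĝ_{i,j}` and `g_k = (1/r k) ∑_j g_{k,j}`.  If
`m({g_{k₀} > 0} \ {ĝ_i > 0}) = 0` for some `i ∈ {1,…,s'}` and
`k₀ ∈ {1,…,s}`, then `r' i` divides `r k₀`. -/
theorem stmt_1 {X : Type*} [MeasurableSpace X] (m : Measure X) [IsProbabilityMeasure m]
    (T : X → X) (hT : Measurable T)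
    (hns : ∀ A : Set X, MeasurableSet A → m A = 0 → m (T ⁻¹' A) = 0)
    (L : (X → ℝ) → X → ℝ) (hL : IsPF m T L)
    (s : ℕ) (r : ℕ → ℕ) (g : ℕ → ℕ → X → ℝ) (Λ : ℕ → ℕ → (X →₁[m] ℝ) →L[ℝ] ℝ)
    (hap : AsympPeriodic m L s r g Λ)
    (s' : ℕ) (r' : ℕ → ℕ) (g' : ℕ → ℕ → X → ℝ)
    (hs' : 1 ≤ s') (hr' : ∀ i ∈ Finset.Icc 1 s', 1 ≤ r' i)
    (hdens : ∀ i ∈ Finset.Icc 1 s', ∀ j ∈ Finset.Icc 1 (r' i),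
      Measurable (g' i j) ∧ Integrable (g' i j) m ∧ 0 ≤ᵐ[m] g' i j ∧ ∫ x, g' i j x ∂m = 1)
    (horth : ∀ i ∈ Finset.Icc 1 s', ∀ j ∈ Finset.Icc 1 (r' i), ∀ k ∈ Finset.Icc 1 s',
      ∀ l ∈ Finset.Icc 1 (r' k), (i, j) ≠ (k, l) →
        (fun x => g' i j x * g' k l x) =ᵐ[m] 0)
    (hcyc : ∀ i ∈ Finset.Icc 1 s',
      (∀ j ∈ Finset.Icc 1 (r' i - 1),
        m ({x | 0 < g' i j x} \ T ⁻¹' {x | 0 < g' i (j + 1) x}) = 0) ∧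
        m ({x | 0 < g' i (r' i) x} \ T ⁻¹' {x | 0 < g' i 1 x}) = 0)
    (i : ℕ) (hi : i ∈ Finset.Icc 1 s') (k₀ : ℕ) (hk₀ : k₀ ∈ Finset.Icc 1 s)
    (hsupp : m ({x | 0 < avgDens (r k₀) (g k₀) x} \
        {x | 0 < avgDens (r' i) (g' i) x}) = 0) :
    r' i ∣ r k₀ :=
  stmt_1_general m T hT L hL s r g Λ hap s' r' g' hr' hdens horth hcyc i hi k₀ hk₀ hsupp
end
end

section
/- In the skew product setting, let f, g ∈ L¹(m) be nonnegative functions on X (regarded as functions on X×Ω not depending on ω) such that (𝓛_S f)(x,ω) = g(x) for m×P-a.e. (x,ω). Then there exists a measurable set Y₀ ⊆ Y with η(Y₀) = 1 such that for every y ∈ Y₀, m({x ∈ X : f(x) > 0} \ T_y⁻¹{x ∈ X : g(x) > 0}) = 0. -/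
/-! On `E = {(x, ω) | g x ≤ 0}` the density `𝓛_S (f ∘ fst) = g ∘ fst` vanishes, so
`∫_{S⁻¹ E} f ∘ fst = ∫_E 𝓛_S (f ∘ fst) = 0`; as `f ≥ 0`, this gives `f x = 0` for a.e. `(x, ω)`
with `g (T_{ω₀} x) ≤ 0`. That condition depends on `ω` only through `ω₀`, whose law under `P`
is `η`, so it holds `m × η`-a.e. on `X × Y`, and Fubini turns it into an `m`-a.e. statement
for `η`-a.e. `y`. -/

open MeasureTheory Filter Topology

noncomputable section

namespace IsPF

variable {α : Type*} [MeasurableSpace α] {μ : Measure α} {T : α → α} {L : (α → ℝ) → α → ℝ}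

theorem ae_pos_comp_of_pos (hL : IsPF μ T L) (hT : Measurable T) {f g : α → ℝ}
    (hf : Integrable f μ) (hf0 : 0 ≤ᵐ[μ] f) (hg : Measurable g) (hg0 : 0 ≤ᵐ[μ] g)
    (hLf : L f =ᵐ[μ] g) : ∀ᵐ x ∂μ, 0 < f x → 0 < g (T x) := by
  set E := {x | g x ≤ 0}
  have hE : MeasurableSet E := measurableSet_le hg measurable_const
  have hg_zero : ∫ x in E, g x ∂μ = 0 := by
    refine setIntegral_eq_zero_of_ae_eq_zero ?_
    filter_upwards [hg0] with x hx hxE using le_antisymm hxE hx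
  have hf_int : ∫ x in T ⁻¹' E, f x ∂μ = 0 := by
    rw [← (hL f hf).2 E hE, setIntegral_congr_ae hE (hLf.mono fun x hx _ => hx), hg_zero]
  have hf_zero : f =ᵐ[μ.restrict (T ⁻¹' E)] 0 :=
    (integral_eq_zero_iff_of_nonneg_ae (ae_restrict_of_ae hf0) hf.integrableOn).mp hf_int
  filter_upwards [(ae_restrict_iff' (hT hE)).mp hf_zero] with x hx hfx
  by_contra hgx
  exact hfx.ne' (hx (not_lt.mp hgx))

end IsPF

theorem map_eval_zero_of_cylinder {Y : Type*} [MeasurableSpace Y] {η : Measure Y}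
    {P : Measure (ℕ → Y)}
    (hP : ∀ (n : ℕ) (A : ℕ → Set Y), (∀ i, MeasurableSet (A i)) →
      P {ω : ℕ → Y | ∀ i < n, ω i ∈ A i} = ∏ i ∈ Finset.range n, η (A i)) :
    P.map (fun ω => ω 0) = η := by
  ext t ht
  rw [Measure.map_apply (measurable_pi_apply 0) ht]
  simpa [Nat.lt_one_iff, Set.preimage] using hP 1 (fun _ => t) (fun _ => ht)

theorem exists_measurableSet_prob_eq_one_of_ae {Y : Type*} [MeasurableSpace Y] {η : Measure Y}
    [IsProbabilityMeasure η] {p : Y → Prop} (h : ∀ᵐ y ∂η, p y) :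
    ∃ Y₀ : Set Y, MeasurableSet Y₀ ∧ η Y₀ = 1 ∧ ∀ y ∈ Y₀, p y := by
  obtain ⟨N, hpN, hN, hN0⟩ := exists_measurable_superset_of_null (ae_iff.mp h)
  exact ⟨Nᶜ, hN.compl, (prob_compl_eq_one_iff hN).mpr hN0,
    fun y hy => not_not.mp fun hpy => hy (hpN hpy)⟩

theorem ae_prod_of_ae_prod_comp {X Ω Y : Type*} [MeasurableSpace X] [MeasurableSpace Ω]
    [MeasurableSpace Y] {m : Measure X} [SFinite m] {P : Measure Ω} [SFinite P] {π : Ω → Y}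
    (hπ : Measurable π) {p : X × Y → Prop} (hp : MeasurableSet {q | p q})
    (h : ∀ᵐ z ∂m.prod P, p (z.1, π z.2)) : ∀ᵐ q ∂m.prod (P.map π), p q := by
  rw [← Measure.map_id (μ := m), Measure.map_prod_map _ _ measurable_id hπ,
    ae_map_iff (measurable_id.prodMap hπ).aemeasurable hp]
  exact h

theorem stmt_4_general {X Y : Type*} [MeasurableSpace X] [MeasurableSpace Y]
    (m : Measure X) [IsProbabilityMeasure m]
    (η : Measure Y) [IsProbabilityMeasure η]
    (P : Measure (ℕ → Y)) [IsProbabilityMeasure P]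
    (hP : ∀ (n : ℕ) (A : ℕ → Set Y), (∀ i, MeasurableSet (A i)) →
      P {ω : ℕ → Y | ∀ i < n, ω i ∈ A i} = ∏ i ∈ Finset.range n, η (A i))
    (T : Y → X → X) (hTmeas : Measurable fun p : X × Y => T p.2 p.1)
    (LS : (X × (ℕ → Y) → ℝ) → X × (ℕ → Y) → ℝ)
    (hLS : IsPF (m.prod P)
      (fun p : X × (ℕ → Y) => (T (p.2 0) p.1, fun n => p.2 (n + 1))) LS)
    (f g : X → ℝ) (hfm : Measurable f) (hgm : Measurable g)
    (hfi : Integrable f m) (hf0 : 0 ≤ f) (hg0 : 0 ≤ g)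
    (heq : LS (fun p => f p.1) =ᵐ[m.prod P] fun p => g p.1) :
    ∃ Y₀ : Set Y, MeasurableSet Y₀ ∧ η Y₀ = 1 ∧
      ∀ y ∈ Y₀, m ({x | 0 < f x} \ T y ⁻¹' {x | 0 < g x}) = 0 := by
  have hS : Measurable fun p : X × (ℕ → Y) => (T (p.2 0) p.1, fun n => p.2 (n + 1)) :=
    (hTmeas.comp (measurable_fst.prodMk (by fun_prop))).prodMk (by fun_prop)
  have hskew : ∀ᵐ z ∂m.prod P, 0 < f z.1 → 0 < g (T (z.2 0) z.1) :=
    hLS.ae_pos_comp_of_pos hS (hfi.comp_fst P) (.of_forall fun z => hf0 z.1)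
      (hgm.comp measurable_fst) (.of_forall fun z => hg0 z.1) heq
  have hset : MeasurableSet {q : X × Y | 0 < f q.1 → 0 < g (T q.2 q.1)} :=
    (measurableSet_lt measurable_const (hfm.comp measurable_fst)).imp
      (measurableSet_lt measurable_const (hgm.comp hTmeas))
  have hprod := ae_prod_of_ae_prod_comp (π := fun ω : ℕ → Y => ω 0) (by fun_prop) hset hskew
  rw [map_eval_zero_of_cylinder hP, Measure.ae_prod_iff_ae_ae hset,
    Measure.ae_ae_comm hset] at hprod
  obtain ⟨Y₀, hY₀, hηY₀, hY₀ae⟩ := exists_measurableSet_prob_eq_one_of_ae hprod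
  exact ⟨Y₀, hY₀, hηY₀, fun y hy =>
    measure_mono_null (fun x hx (h : 0 < f x → 0 < g (T y x)) => hx.2 (h hx.1))
      (ae_iff.mp (hY₀ae y hy))⟩

/-- **Proposition 2.9.** In the skew product setting (with `P` the infinite
product of copies of `η` and `S(x,ω) = (T_{ω₀} x, σω)`), if `f, g ∈ L¹(m)` are
nonnegative and `𝓛_S (f ∘ fst) = g ∘ fst` a.e., then there is a measurable set
`Y₀ ⊆ Y` with `η(Y₀) = 1` such that `m({f > 0} \ T_y⁻¹{g > 0}) = 0` for every
`y ∈ Y₀`. -/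
theorem stmt_4 {X Y : Type*} [MeasurableSpace X] [MeasurableSpace Y]
    (m : Measure X) [IsProbabilityMeasure m]
    (η : Measure Y) [IsProbabilityMeasure η]
    (P : Measure (ℕ → Y)) [IsProbabilityMeasure P]
    (hP : ∀ (n : ℕ) (A : ℕ → Set Y), (∀ i, MeasurableSet (A i)) →
      P {ω : ℕ → Y | ∀ i < n, ω i ∈ A i} = ∏ i ∈ Finset.range n, η (A i))
    (T : Y → X → X) (hTmeas : Measurable fun p : X × Y => T p.2 p.1)
    (hTns : ∀ y : Y, ∀ A : Set X, MeasurableSet A → m A = 0 → m (T y ⁻¹' A) = 0)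
    (LS : (X × (ℕ → Y) → ℝ) → X × (ℕ → Y) → ℝ)
    (hLS : IsPF (m.prod P)
      (fun p : X × (ℕ → Y) => (T (p.2 0) p.1, fun n => p.2 (n + 1))) LS)
    (f g : X → ℝ) (hfm : Measurable f) (hgm : Measurable g)
    (hfi : Integrable f m) (hgi : Integrable g m) (hf0 : 0 ≤ f) (hg0 : 0 ≤ g)
    (heq : LS (fun p => f p.1) =ᵐ[m.prod P] fun p => g p.1) :
    ∃ Y₀ : Set Y, MeasurableSet Y₀ ∧ η Y₀ = 1 ∧
      ∀ y ∈ Y₀, m ({x | 0 < f x} \ T y ⁻¹' {x | 0 < g x}) = 0 :=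
  stmt_4_general m η P hP T hTmeas LS hLS f g hfm hgm hfi hf0 hg0 heq
end
end
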